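/- arXiv:2204.02487 — 2 statements merged into one kernel-verified Lean document; each statement's English description precedes it below -/
import Mathlib

section
/- Let A, B ⊂ ℝ^d be disjoint finite sets such that A is high above B, and let {p} ∪ K be a (d+1)-element subset of A ∪ B with p ∉ K and π(p) in the interior of conv(π(K)). Then: (i) if {p} ∪ K is a convex cup and p ∈ A, then K ⊆ A; (ii) if {p} ∪ K is a convex cap and p ∈ B, then K ⊆ B. -/
open scoped BigOperators ENNReal

noncomputable section

/-- The projection `π : ℝ^d → ℝ^{d−1}` forgetting the last coordinate. -/
def proj {d : ℕ} (x : EuclideanSpace ℝ (Fin d)) : EuclideanSpace ℝ (Fin (d - 1)) :=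
  WithLp.toLp 2 (fun i => x (Fin.castLE (Nat.sub_le d 1) i))

/-- The height `h(x) = x_d`, the last coordinate of `x ∈ ℝ^d` (junk value `0` for `d = 0`). -/
def hCoord {d : ℕ} (x : EuclideanSpace ℝ (Fin d)) : ℝ :=
  if h : 0 < d then x ⟨d - 1, by omega⟩ else 0

/-- The first coordinate of `x ∈ ℝ^d` (junk value `0` for `d = 0`). -/
def firstCoord {d : ℕ} (x : EuclideanSpace ℝ (Fin d)) : ℝ :=
  if h : 0 < d then x ⟨0, h⟩ else 0

/-- A set `Q ⊆ ℝ^m` is in affinely general position if any `m+1` of its points are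
affinely independent. -/
def AffGenPos {m : ℕ} (Q : Set (EuclideanSpace ℝ (Fin m))) : Prop :=
  ∀ s : Finset (EuclideanSpace ℝ (Fin m)), ↑s ⊆ Q → s.card = m + 1 →
    AffineIndependent ℝ (fun x : s => (x : EuclideanSpace ℝ (Fin m)))

/-- A set `Q ⊆ ℝ^d` is convex independent if it is in general position and no point of `Q`
lies in the convex hull of the other points of `Q`. -/
def ConvIndep {d : ℕ} (Q : Set (EuclideanSpace ℝ (Fin d))) : Prop :=
  AffGenPos Q ∧ ∀ q ∈ Q, q ∉ convexHull ℝ (Q \ {q})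

/-- A finite set `P ⊆ ℝ^d` is regular if (R1) the projection of `P` to each coordinate axis is
injective; (R2) `π(P)` is in affinely general position in `ℝ^{d−1}`; (R3) for every generic pair
`(S, T)` of `P` (disjoint nonempty subsets with `|S| + |T| = d + 1`), the affine spans of `π(S)`
and `π(T)` intersect in exactly one point. -/
def Regular {d : ℕ} (P : Set (EuclideanSpace ℝ (Fin d))) : Prop :=
  (∀ i : Fin d, Set.InjOn (fun p : EuclideanSpace ℝ (Fin d) => p i) P) ∧
  AffGenPos (proj '' P) ∧
  (∀ S T : Finset (EuclideanSpace ℝ (Fin d)), ↑S ⊆ P → ↑T ⊆ P → Disjoint S T →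
    S.Nonempty → T.Nonempty → S.card + T.card = d + 1 →
    ∃! q : EuclideanSpace ℝ (Fin (d - 1)),
      q ∈ affineSpan ℝ (proj '' (S : Set (EuclideanSpace ℝ (Fin d)))) ∧
      q ∈ affineSpan ℝ (proj '' (T : Set (EuclideanSpace ℝ (Fin d)))))

/-- `A` is high above `B` if `A`, `B` are disjoint, `A ∪ B` is regular, and for every generic pair
`(S, T)` of `A ∪ B` with `S ⊆ A`, `T ⊆ B`, the points `s ∈ aff S`, `t ∈ aff T` with
`π(s) = π(t)` satisfy `h(s) > h(t)`. -/
def HighAbove {d : ℕ} (A B : Set (EuclideanSpace ℝ (Fin d))) : Prop :=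
  Disjoint A B ∧ Regular (A ∪ B) ∧
  ∀ S T : Finset (EuclideanSpace ℝ (Fin d)), ↑S ⊆ A → ↑T ⊆ B →
    S.Nonempty → T.Nonempty → S.card + T.card = d + 1 →
    ∀ s t : EuclideanSpace ℝ (Fin d),
      s ∈ affineSpan ℝ (S : Set (EuclideanSpace ℝ (Fin d))) →
      t ∈ affineSpan ℝ (T : Set (EuclideanSpace ℝ (Fin d))) →
      proj s = proj t → hCoord t < hCoord s

/-- A regular set `P ⊆ ℝ^d` is a convex cup if whenever `p, p₁, …, p_d ∈ P` are distinct points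
with `π(p) = ∑ cᵢ π(pᵢ)`, all `cᵢ ∈ (0,1)` and `∑ cᵢ = 1`, then `h(p) < ∑ cᵢ h(pᵢ)`. -/
def ConvexCup {d : ℕ} (P : Set (EuclideanSpace ℝ (Fin d))) : Prop :=
  Regular P ∧
  ∀ (p : EuclideanSpace ℝ (Fin d)) (q : Fin d → EuclideanSpace ℝ (Fin d)) (c : Fin d → ℝ),
    p ∈ P → (∀ i, q i ∈ P) → Function.Injective q → (∀ i, p ≠ q i) →
    (∀ i, c i ∈ Set.Ioo (0 : ℝ) 1) → ∑ i, c i = 1 →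
    proj p = ∑ i, c i • proj (q i) →
    hCoord p < ∑ i, c i * hCoord (q i)

/-- A regular set `P ⊆ ℝ^d` is a convex cap if whenever `p, p₁, …, p_d ∈ P` are distinct points
with `π(p) = ∑ cᵢ π(pᵢ)`, all `cᵢ ∈ (0,1)` and `∑ cᵢ = 1`, then `h(p) > ∑ cᵢ h(pᵢ)`. -/
def ConvexCap {d : ℕ} (P : Set (EuclideanSpace ℝ (Fin d))) : Prop :=
  Regular P ∧
  ∀ (p : EuclideanSpace ℝ (Fin d)) (q : Fin d → EuclideanSpace ℝ (Fin d)) (c : Fin d → ℝ),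
    p ∈ P → (∀ i, q i ∈ P) → Function.Injective q → (∀ i, p ≠ q i) →
    (∀ i, c i ∈ Set.Ioo (0 : ℝ) 1) → ∑ i, c i = 1 →
    proj p = ∑ i, c i • proj (q i) →
    ∑ i, c i * hCoord (q i) < hCoord p

/-- `∂_π P`, the set of points of `P` whose projection does not lie in the interior of the
convex hull of `π(P)`. -/
def piBoundary {d : ℕ} (P : Set (EuclideanSpace ℝ (Fin d))) : Set (EuclideanSpace ℝ (Fin d)) :=
  {p ∈ P | proj p ∉ interior (convexHull ℝ (proj '' P))}

/-- The rank of `p` in `P`: the number of points of `P` whose first coordinate is at most that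
of `p`.  If `P` is sorted as `p₁, p₂, …` by strictly increasing first coordinate, then
`rank P pₜ = t`. -/
def rank {d : ℕ} (P : Set (EuclideanSpace ℝ (Fin d))) (p : EuclideanSpace ℝ (Fin d)) : ℕ :=
  Set.ncard {q ∈ P | firstCoord q ≤ firstCoord p}

/-- The subset `P_{a,b} = {p_t ∈ P : t ≡ a (mod b)}` of `P` (sorted by first coordinate). -/
def modClass {d : ℕ} (a b : ℕ) (P : Set (EuclideanSpace ℝ (Fin d))) :
    Set (EuclideanSpace ℝ (Fin d)) :=
  {p ∈ P | rank P p % b = a % b}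

/-- `d`-oscillators, defined recursively: (O1) any one-point set, and any finite subset of `ℝ¹`,
is an oscillator; (O2) for `d ≥ 2` a finite set `P` with `|P| ≥ 2` is a `d`-oscillator if it is
regular, both `P_{1,2}` and `P_{2,2}` are `d`-oscillators, one of `P_{1,2}`, `P_{2,2}` is high
above the other, and `π(P)` is a `(d−1)`-oscillator. -/
inductive IsOscillator : (d : ℕ) → Set (EuclideanSpace ℝ (Fin d)) → Prop
  | single {d : ℕ} (p : EuclideanSpace ℝ (Fin d)) : IsOscillator d {p}
  | dimOne (P : Set (EuclideanSpace ℝ (Fin 1))) (hfin : P.Finite) : IsOscillator 1 P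
  | step {d : ℕ} (P : Set (EuclideanSpace ℝ (Fin d))) (hd : 2 ≤ d) (hfin : P.Finite)
      (hcard : 2 ≤ P.ncard) (hreg : Regular P)
      (h1 : IsOscillator d (modClass 1 2 P))
      (h2 : IsOscillator d (modClass 2 2 P))
      (hab : HighAbove (modClass 1 2 P) (modClass 2 2 P) ∨
        HighAbove (modClass 2 2 P) (modClass 1 2 P))
      (hproj : IsOscillator (d - 1) (proj '' P)) : IsOscillator d P

/-- A finite set `P ⊆ ℝ^d` is generic if for any disjoint nonempty subsets `S, T` of `P` with
`|S| + |T| = d + 2`, the affine spans of `S` and `T` intersect in exactly one point. -/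
def GenericSet {d : ℕ} (P : Set (EuclideanSpace ℝ (Fin d))) : Prop :=
  ∀ S T : Finset (EuclideanSpace ℝ (Fin d)), ↑S ⊆ P → ↑T ⊆ P → Disjoint S T →
    S.Nonempty → T.Nonempty → S.card + T.card = d + 2 →
    ∃! x : EuclideanSpace ℝ (Fin d),
      x ∈ affineSpan ℝ (S : Set (EuclideanSpace ℝ (Fin d))) ∧
      x ∈ affineSpan ℝ (T : Set (EuclideanSpace ℝ (Fin d)))

/-- The point of `ℝ^d` obtained from `y ∈ ℝ^{d−1}` by appending a last coordinate `t`. -/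
def lift {d : ℕ} (y : EuclideanSpace ℝ (Fin (d - 1))) (t : ℝ) : EuclideanSpace ℝ (Fin d) :=
  WithLp.toLp 2 (fun i => if h : (i : ℕ) < d - 1 then y ⟨i, h⟩ else t)

/-- `(N)_ε = ∑_{k≥0} a_k ε^{k+1}` where `N = ∑_{k≥0} a_k 2^k` is the binary expansion of `N`. -/
def binRep (ε : ℝ) (N : ℕ) : ℝ :=
  ∑ k ∈ Finset.range (N + 1), if N.testBit k then ε ^ (k + 1) else 0

/-- The stretch `str_P(C) = i_k − i_1` of a subset `C` of a `d`-oscillator `P` (sorted by first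
coordinate), where `i_1 < … < i_k` are the indices of the elements of `C` in `P`. -/
def stretch {d : ℕ} (P C : Set (EuclideanSpace ℝ (Fin d))) : ℕ :=
  sSup (rank P '' C) - sInf (rank P '' C)

/-- `Δ_d(k)`: the minimum stretch `str_P(C)` over all finite `d`-oscillators `P` and all
`k`-point convex independent subsets `C ⊆ P` (`= ∞` if there are none). -/
def Delta (d k : ℕ) : ℝ≥0∞ :=
  sInf {s : ℝ≥0∞ | ∃ P C : Set (EuclideanSpace ℝ (Fin d)),
    IsOscillator d P ∧ C ⊆ P ∧ ConvIndep C ∧ C.ncard = k ∧ s = (stretch P C : ℝ≥0∞)}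

/-- `Δ'_d(k)`: the minimum stretch `str_P(C)` over all finite `d`-oscillators `P` and all
`k`-point subsets `C ⊆ P` that are convex cups or convex caps (`= ∞` if there are none). -/
def Delta' (d k : ℕ) : ℝ≥0∞ :=
  sInf {s : ℝ≥0∞ | ∃ P C : Set (EuclideanSpace ℝ (Fin d)),
    IsOscillator d P ∧ C ⊆ P ∧ (ConvexCup C ∨ ConvexCap C) ∧ C.ncard = k ∧
      s = (stretch P C : ℝ≥0∞)}

/-!
Let `K = {q₀, …, q_{d-1}}` and let `cᵢ > 0` be the barycentric coordinates of `π(p)` with respect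
to the simplex `π(K)`. Then `p - ∑ cᵢ qᵢ` is a vertical vector of height `h(p) - ∑ cᵢ h(qᵢ)`.
If `p ∈ A` but some `qᵢ ∈ B`, split this signed combination into its part on `A` and its part on
`B`; after rescaling these are points `s ∈ aff S`, `t ∈ aff T` with `S ⊆ A`, `T ⊆ B` and
`π(s) = π(t)`, so `h(s) > h(t)` says that `p` lies above the lifted simplex, contradicting the
cup condition. The cap case is the same with the signs reversed.
-/

open Function Finset

@[simps]
def projLinearMap (d : ℕ) : EuclideanSpace ℝ (Fin d) →ₗ[ℝ] EuclideanSpace ℝ (Fin (d - 1)) where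
  toFun := proj
  map_add' _ _ := rfl
  map_smul' _ _ := rfl

@[simps]
def hCoordLinearMap (d : ℕ) : EuclideanSpace ℝ (Fin d) →ₗ[ℝ] ℝ where
  toFun := hCoord
  map_add' _ _ := by unfold hCoord; split_ifs <;> simp
  map_smul' _ _ := by unfold hCoord; split_ifs <;> simp

theorem sum_smul_mem_affineSpan_image {ι V : Type*} [AddCommGroup V] [Module ℝ V]
    {s : Finset ι} {w : ι → ℝ} (hw : ∑ i ∈ s, w i = 1) (x : ι → V) :
    ∑ i ∈ s, w i • x i ∈ affineSpan ℝ (x '' s) := by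
  rw [← s.affineCombination_eq_linear_combination x w hw]
  exact affineCombination_mem_affineSpan_image hw (fun i hi hi' => absurd hi hi') x

theorem HighAbove.hCoord_pos_of_proj_eq_zero {d : ℕ} {A B : Set (EuclideanSpace ℝ (Fin d))}
    (hAB : HighAbove A B) {ι : Type*} [Fintype ι]
    {x : ι → EuclideanSpace ℝ (Fin d)} (hx : Injective x) (hcard : Fintype.card ι = d + 1)
    {σ : Finset ι} (hσA : ∀ i ∈ σ, x i ∈ A) (hσB : ∀ i ∉ σ, x i ∈ B) {w : ι → ℝ}
    (hw : ∑ i, w i = 0) (hwσ : 0 < ∑ i ∈ σ, w i) (hproj : proj (∑ i, w i • x i) = 0) :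
    0 < hCoord (∑ i, w i • x i) := by
  classical
  set γ := ∑ i ∈ σ, w i
  have hwσc : ∑ i ∈ σᶜ, w i = -γ := by linarith [sum_add_sum_compl σ w]
  -- splitting the vertical vector `∑ wᵢ xᵢ` into its `A`-part and `B`-part, rescaled to affine
  -- combinations, gives points of `aff (x σ)` and `aff (x σᶜ)` over the same point of `ℝ^{d-1}`
  set s := ∑ i ∈ σ, (γ⁻¹ * w i) • x i
  set t := ∑ i ∈ σᶜ, (-γ⁻¹ * w i) • x i
  have hs : s ∈ affineSpan ℝ (x '' σ) :=
    sum_smul_mem_affineSpan_image (by rw [← mul_sum]; exact inv_mul_cancel₀ hwσ.ne') x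
  have ht : t ∈ affineSpan ℝ (x '' ↑σᶜ) :=
    sum_smul_mem_affineSpan_image (by rw [← mul_sum, hwσc]; field_simp) x
  have hst : s - t = γ⁻¹ • ∑ i, w i • x i := by
    simp only [s, t, neg_mul, neg_smul, sum_neg_distrib, sub_neg_eq_add, ← smul_smul,
      ← smul_sum, ← smul_add, sum_add_sum_compl]
  have hσne : σ.Nonempty := nonempty_of_sum_ne_zero hwσ.ne'
  have hσcne : σᶜ.Nonempty := nonempty_of_sum_ne_zero (by rw [hwσc]; exact neg_ne_zero.2 hwσ.ne')
  have hlt := hAB.2.2 (σ.image x) (σᶜ.image x) (by rw [coe_image, Set.image_subset_iff]; exact hσA)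
    (by rw [coe_image, Set.image_subset_iff]; exact fun i hi => hσB i (by simpa using hi))
    (hσne.image x) (hσcne.image x)
    (by rw [card_image_of_injective _ hx, card_image_of_injective _ hx, card_add_card_compl,
      hcard]) s t (by simpa using hs) (by simpa using ht)
    (by rw [← sub_eq_zero, ← projLinearMap_apply, ← projLinearMap_apply, ← map_sub, hst,
      map_smul, projLinearMap_apply, hproj, smul_zero])
  have hsub : hCoord s - hCoord t = γ⁻¹ * hCoord (∑ i, w i • x i) := by
    rw [← hCoordLinearMap_apply, ← hCoordLinearMap_apply, ← map_sub, hst, map_smul,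
      hCoordLinearMap_apply, smul_eq_mul]
  have : 0 < γ⁻¹ * hCoord (∑ i, w i • x i) := by linarith
  exact pos_of_mul_pos_right this (inv_pos.2 hwσ).le

theorem exists_pos_weights_of_mem_interior_convexHull {ι V : Type*} [Fintype ι]
    [NormedAddCommGroup V] [NormedSpace ℝ V] [FiniteDimensional ℝ V] {v : ι → V}
    (hcard : Fintype.card ι = Module.finrank ℝ V + 1) {x : V}
    (hx : x ∈ interior (convexHull ℝ (Set.range v))) :
    ∃ w : ι → ℝ, (∀ i, 0 < w i) ∧ ∑ i, w i = 1 ∧ ∑ i, w i • v i = x := by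
  have hspan : affineSpan ℝ (Set.range v) = ⊤ :=
    interior_convexHull_nonempty_iff_affineSpan_eq_top.1 ⟨x, hx⟩
  have hind : AffineIndependent ℝ v := by
    rw [affineIndependent_iff_le_finrank_vectorSpan ℝ v hcard, ← direction_affineSpan, hspan,
      AffineSubspace.direction_top, finrank_top]
  let b : AffineBasis ι ℝ V := ⟨v, hind, hspan⟩
  have hb : Set.range b = Set.range v := rfl
  rw [← hb, b.interior_convexHull] at hx
  exact ⟨fun i => b.coord i x, hx, b.sum_coord_apply_eq_one x,
    b.linear_combination_coord_eq_self x⟩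

theorem mem_Ioo_of_sum_eq_one {ι : Type*} [Fintype ι] (hι : 1 < Fintype.card ι) {w : ι → ℝ}
    (hw : ∀ i, 0 < w i) (hsum : ∑ i, w i = 1) (i : ι) : w i ∈ Set.Ioo 0 1 := by
  obtain ⟨j, hji⟩ := Fintype.exists_ne_of_one_lt_card hι i
  exact ⟨hw i, hsum ▸ single_lt_sum hji (mem_univ i) (mem_univ j) (hw j)
    fun k _ _ => (hw k).le⟩

theorem Set.exists_injective_fin_range_eq_of_ncard_eq {α : Type*} {K : Set α} {n : ℕ}
    (hn : n ≠ 0) (hK : K.ncard = n) : ∃ q : Fin n → α, Injective q ∧ Set.range q = K := by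
  have hcard : Nat.card K = n := hK
  have : Finite K := Nat.finite_of_card_ne_zero (hcard ▸ hn)
  let e := Finite.equivFinOfCardEq hcard
  exact ⟨Subtype.val ∘ e.symm, Subtype.val_injective.comp e.symm.injective, by
    rw [Set.range_comp, e.symm.range_eq_univ, Set.image_univ, Subtype.range_coe]⟩

section Apex

variable {d : ℕ} {A B : Set (EuclideanSpace ℝ (Fin d))} {p : EuclideanSpace ℝ (Fin d)}
  {q : Fin d → EuclideanSpace ℝ (Fin d)} {c : Fin d → ℝ}

def apexWeights (c : Fin d → ℝ) (a : ℝ) : Fin (d + 1) → ℝ := Fin.cons a fun i => -(a * c i)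

theorem sum_apexWeights (hcsum : ∑ i, c i = 1) (a : ℝ) : ∑ k, apexWeights c a k = 0 := by
  simp [apexWeights, Fin.sum_univ_succ, ← mul_sum, hcsum]

theorem sum_apexWeights_smul (a : ℝ) :
    ∑ k, apexWeights c a k • (Fin.cons p q : Fin (d + 1) → _) k = a • (p - ∑ i, c i • q i) := by
  simp [apexWeights, Fin.sum_univ_succ, smul_sum, mul_smul, sub_eq_add_neg]

theorem proj_sum_apexWeights_smul (hproj : ∑ i, c i • proj (q i) = proj p) (a : ℝ) :
    proj (∑ k, apexWeights c a k • (Fin.cons p q : Fin (d + 1) → _) k) = 0 := by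
  rw [sum_apexWeights_smul, ← projLinearMap_apply]
  simp only [map_smul, map_sub, map_sum, projLinearMap_apply, hproj, sub_self, smul_zero]

theorem hCoord_sum_apexWeights_smul (a : ℝ) :
    hCoord (∑ k, apexWeights c a k • (Fin.cons p q : Fin (d + 1) → _) k)
      = a * (hCoord p - ∑ i, c i * hCoord (q i)) := by
  rw [sum_apexWeights_smul, ← hCoordLinearMap_apply]
  simp only [map_smul, map_sub, map_sum, hCoordLinearMap_apply, smul_eq_mul]

open Classical in
theorem HighAbove.pos_mul_hCoord_sub_sum (hAB : HighAbove A B) (hq : Injective q)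
    (hpq : p ∉ Set.range q) (hpAB : p ∈ A ∪ B) (hqAB : ∀ i, q i ∈ A ∪ B)
    (hcsum : ∑ i, c i = 1) (hproj : ∑ i, c i • proj (q i) = proj p) {a : ℝ}
    (ha : 0 < ∑ k with (Fin.cons p q : Fin (d + 1) → _) k ∈ A, apexWeights c a k) :
    0 < a * (hCoord p - ∑ i, c i * hCoord (q i)) := by
  have hxAB : ∀ k, (Fin.cons p q : Fin (d + 1) → _) k ∈ A ∪ B :=
    Fin.forall_fin_succ.2 ⟨hpAB, hqAB⟩
  rw [← hCoord_sum_apexWeights_smul]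
  exact hAB.hCoord_pos_of_proj_eq_zero (Fin.cons_injective_iff.2 ⟨hpq, hq⟩) (Fintype.card_fin _)
    (fun k hk => (mem_filter.1 hk).2)
    (fun k hk => (hxAB k).resolve_left (by simpa using hk))
    (sum_apexWeights hcsum a) ha (proj_sum_apexWeights_smul hproj a)

theorem HighAbove.sum_mul_hCoord_lt_of_mem_left (hAB : HighAbove A B) (hq : Injective q)
    (hpq : p ∉ Set.range q) (hpA : p ∈ A) (hqAB : ∀ i, q i ∈ A ∪ B) (hc : ∀ i, 0 < c i)
    (hcsum : ∑ i, c i = 1) (hproj : ∑ i, c i • proj (q i) = proj p) {j : Fin d}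
    (hj : q j ∉ A) :
    ∑ i, c i * hCoord (q i) < hCoord p := by
  classical
  set σ := univ.filter fun k => (Fin.cons p q : Fin (d + 1) → _) k ∈ A
  have hσc : ∑ k ∈ σᶜ, apexWeights c 1 k < 0 := by
    refine sum_neg (fun k hk => ?_) ⟨j.succ, by simpa [σ] using hj⟩
    induction k using Fin.cases with
    | zero => simp [σ, hpA] at hk
    | succ i => simpa [apexWeights] using hc i
  have hσ : 0 < ∑ k ∈ σ, apexWeights c 1 k := by
    linarith [sum_add_sum_compl σ (apexWeights c 1), sum_apexWeights hcsum 1]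
  have := hAB.pos_mul_hCoord_sub_sum hq hpq (Or.inl hpA) hqAB hcsum hproj hσ
  linarith

theorem HighAbove.hCoord_lt_sum_mul_of_mem_right (hAB : HighAbove A B) (hq : Injective q)
    (hpq : p ∉ Set.range q) (hpB : p ∈ B) (hqAB : ∀ i, q i ∈ A ∪ B) (hc : ∀ i, 0 < c i)
    (hcsum : ∑ i, c i = 1) (hproj : ∑ i, c i • proj (q i) = proj p) {j : Fin d}
    (hj : q j ∉ B) :
    hCoord p < ∑ i, c i * hCoord (q i) := by
  classical
  have hσ : 0 < ∑ k with (Fin.cons p q : Fin (d + 1) → _) k ∈ A, apexWeights c (-1) k := by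
    refine sum_pos' (fun k hk => ?_)
      ⟨j.succ, by simpa using (hqAB j).resolve_right hj, by simpa [apexWeights] using hc j⟩
    induction k using Fin.cases with
    | zero => simp [hAB.1.notMem_of_mem_right hpB] at hk
    | succ i => simpa [apexWeights] using (hc i).le
  have := hAB.pos_mul_hCoord_sub_sum hq hpq (Or.inr hpB) hqAB hcsum hproj hσ
  linarith

end Apex

theorem stmt7_general (d : ℕ) (hd : 2 ≤ d) (A B : Set (EuclideanSpace ℝ (Fin d)))
    (hAB : HighAbove A B)
    (p : EuclideanSpace ℝ (Fin d)) (K : Set (EuclideanSpace ℝ (Fin d)))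
    (hpK : p ∉ K) (hsub : insert p K ⊆ A ∪ B) (hcard : (insert p K).ncard = d + 1)
    (hint : proj p ∈ interior (convexHull ℝ (proj '' K))) :
    (ConvexCup (insert p K) → p ∈ A → K ⊆ A) ∧
    (ConvexCap (insert p K) → p ∈ B → K ⊆ B) := by
  have hK : K.ncard = d := by
    have hfin : K.Finite :=
      (Set.finite_of_ncard_pos (by omega : 0 < (insert p K).ncard)).subset (Set.subset_insert p K)
    rw [Set.ncard_insert_of_notMem hpK hfin] at hcard
    omega
  obtain ⟨q, hq, rfl⟩ := Set.exists_injective_fin_range_eq_of_ncard_eq (by omega) hK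
  obtain ⟨c, hc, hcsum, hproj⟩ := exists_pos_weights_of_mem_interior_convexHull (v := proj ∘ q)
    (by rw [Fintype.card_fin, finrank_euclideanSpace_fin]; omega) (by rwa [Set.range_comp])
  have hcIoo := mem_Ioo_of_sum_eq_one (by rw [Fintype.card_fin]; omega) hc hcsum
  have hqAB : ∀ i, q i ∈ A ∪ B := fun i => hsub (Set.mem_insert_of_mem _ ⟨i, rfl⟩)
  have hpq : ∀ i, p ≠ q i := fun i h => hpK ⟨i, h.symm⟩
  have hqmem : ∀ i, q i ∈ insert p (Set.range q) := fun i => Set.mem_insert_of_mem _ ⟨i, rfl⟩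
  refine ⟨fun hcup hpA => ?_, fun hcap hpB => ?_⟩ <;> rintro _ ⟨j, rfl⟩ <;> by_contra hj
  · have := hcup.2 p q c (Set.mem_insert _ _) hqmem hq hpq hcIoo hcsum hproj.symm
    have := hAB.sum_mul_hCoord_lt_of_mem_left hq hpK hpA hqAB hc hcsum hproj hj
    linarith
  · have := hcap.2 p q c (Set.mem_insert _ _) hqmem hq hpq hcIoo hcsum hproj.symm
    have := hAB.hCoord_lt_sum_mul_of_mem_right hq hpK hpB hqAB hc hcsum hproj hj
    linarith

theorem stmt7 (d : ℕ) (hd : 2 ≤ d) (A B : Set (EuclideanSpace ℝ (Fin d)))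
    (hAfin : A.Finite) (hBfin : B.Finite) (hAB : HighAbove A B)
    (p : EuclideanSpace ℝ (Fin d)) (K : Set (EuclideanSpace ℝ (Fin d)))
    (hpK : p ∉ K) (hsub : insert p K ⊆ A ∪ B) (hcard : (insert p K).ncard = d + 1)
    (hint : proj p ∈ interior (convexHull ℝ (proj '' K))) :
    (ConvexCup (insert p K) → p ∈ A → K ⊆ A) ∧
    (ConvexCap (insert p K) → p ∈ B → K ⊆ B) :=
  stmt7_general d hd A B hAB p K hpK hsub hcard hint
end
end

section
/- Let P = {p_1, …, p_m} ⊂ ℝ^d be a d-oscillator, sorted by increasing first coordinate. Then for any integers a, b with 1 ≤ a ≤ b ≤ m, the consecutive section P_{[a,b]} = {p_a, p_{a+1}, …, p_b} is a d-oscillator. -/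
open scoped BigOperators ENNReal

noncomputable section

/-!
A consecutive section of a sorted set is the slab of its points whose first coordinate lies in
an interval `[s, t]`, and slabs are what the induction on oscillators handles. The rank in a
slab of `P` is the rank in `P` minus the number `c` of points of `P` left of `s`, so the two
parity classes of a slab are slabs of the parity classes of `P` (swapped when `c` is odd); the
projection of a slab is the slab of `π(P)` with the same bounds; and regularity and being high
above pass to subsets.
-/

def firstCoordSlab {d : ℕ} (P : Set (EuclideanSpace ℝ (Fin d))) (s t : ℝ) :
    Set (EuclideanSpace ℝ (Fin d)) :=
  {p ∈ P | firstCoord p ∈ Set.Icc s t}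

section Rank

variable {d : ℕ} {P : Set (EuclideanSpace ℝ (Fin d))} {p q : EuclideanSpace ℝ (Fin d)}

lemma rank_le_ncard (hP : P.Finite) (p : EuclideanSpace ℝ (Fin d)) : rank P p ≤ P.ncard :=
  Set.ncard_le_ncard (fun _ hq => hq.1) hP

lemma one_le_rank (hP : P.Finite) (hp : p ∈ P) : 1 ≤ rank P p :=
  (Set.ncard_pos (hP.subset fun _ hq => hq.1)).2 ⟨p, hp, le_rfl⟩

lemma rank_le_rank (hP : P.Finite) (h : firstCoord q ≤ firstCoord p) : rank P q ≤ rank P p :=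
  Set.ncard_le_ncard (fun _ hr => ⟨hr.1, hr.2.trans h⟩) (hP.subset fun _ hr => hr.1)

lemma rank_lt_rank (hP : P.Finite) (hp : p ∈ P) (h : firstCoord q < firstCoord p) :
    rank P q < rank P p := by
  have hsub : {r ∈ P | firstCoord r ≤ firstCoord q} ⊆ {r ∈ P | firstCoord r ≤ firstCoord p} :=
    fun _ hr => ⟨hr.1, hr.2.trans h.le⟩
  refine Set.ncard_lt_ncard ?_ (hP.subset fun _ hr => hr.1)
  rw [Set.ssubset_iff_of_subset hsub]
  exact ⟨p, ⟨hp, le_rfl⟩, fun hp' => (not_le.2 h) hp'.2⟩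

lemma rank_le_rank_iff (hP : P.Finite) (hq : q ∈ P) :
    rank P q ≤ rank P p ↔ firstCoord q ≤ firstCoord p :=
  ⟨fun h => not_lt.1 fun h' => (not_le.2 (rank_lt_rank hP hq h')) h, rank_le_rank hP⟩

lemma rank_injOn (hP : P.Finite) (hinj : Set.InjOn firstCoord P) : Set.InjOn (rank P) P :=
  fun _ hx _ hy h => hinj hx hy <| le_antisymm
    ((rank_le_rank_iff hP hx).1 h.le) ((rank_le_rank_iff hP hy).1 h.ge)

lemma rank_image (hP : P.Finite) (hinj : Set.InjOn firstCoord P) :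
    rank P '' P = Set.Icc 1 P.ncard := by
  refine Set.eq_of_subset_of_ncard_le ?_ ?_ (Set.finite_Icc _ _)
  · rintro _ ⟨p, hp, rfl⟩
    exact ⟨one_le_rank hP hp, rank_le_ncard hP p⟩
  · rw [(rank_injOn hP hinj).ncard_image, Set.ncard_eq_toFinset_card',
      Set.toFinset_Icc, Nat.card_Icc, Nat.add_sub_cancel]

lemma exists_rank_eq (hP : P.Finite) (hinj : Set.InjOn firstCoord P) {n : ℕ} (h1 : 1 ≤ n)
    (h2 : n ≤ P.ncard) : ∃ p ∈ P, rank P p = n := by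
  rw [← Set.mem_image, rank_image hP hinj]
  exact ⟨h1, h2⟩

end Rank

section Slab

variable {d : ℕ} {P : Set (EuclideanSpace ℝ (Fin d))} {s t : ℝ}

lemma firstCoordSlab_subset : firstCoordSlab P s t ⊆ P :=
  fun _ hp => hp.1

lemma rank_eq_rank_firstCoordSlab_add (hP : P.Finite) {p : EuclideanSpace ℝ (Fin d)}
    (hp : p ∈ firstCoordSlab P s t) :
    rank P p = rank (firstCoordSlab P s t) p + {q ∈ P | firstCoord q < s}.ncard := by
  have hsplit : {q ∈ P | firstCoord q ≤ firstCoord p} =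
      {q ∈ firstCoordSlab P s t | firstCoord q ≤ firstCoord p} ∪ {q ∈ P | firstCoord q < s} := by
    ext q
    simp only [firstCoordSlab, Set.mem_union, Set.mem_ofPred_eq, Set.mem_Icc]
    have hpst := hp.2
    constructor
    · rintro ⟨hq, hqp⟩
      by_cases hqs : firstCoord q < s
      · exact Or.inr ⟨hq, hqs⟩
      · exact Or.inl ⟨⟨hq, not_lt.1 hqs, hqp.trans hpst.2⟩, hqp⟩
    · rintro (⟨⟨hq, -⟩, hqp⟩ | ⟨hq, hqs⟩)
      · exact ⟨hq, hqp⟩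
      · exact ⟨hq, by linarith [hpst.1]⟩
  have hdisj : Disjoint {q ∈ firstCoordSlab P s t | firstCoord q ≤ firstCoord p}
      {q ∈ P | firstCoord q < s} :=
    Set.disjoint_left.2 fun q hq hq' => (not_lt.2 hq.1.2.1) hq'.2
  rw [rank, hsplit, Set.ncard_union_eq hdisj (hP.subset fun _ hq => hq.1.1)
    (hP.subset fun _ hq => hq.1)]
  rfl

lemma modClass_firstCoordSlab (hP : P.Finite) (i b : ℕ) :
    modClass i b (firstCoordSlab P s t) =
      firstCoordSlab (modClass (i + {q ∈ P | firstCoord q < s}.ncard) b P) s t := by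
  ext p
  constructor
  · rintro ⟨hp, hi⟩
    refine ⟨⟨hp.1, ?_⟩, hp.2⟩
    rw [rank_eq_rank_firstCoordSlab_add hP hp]
    exact Nat.ModEq.add_right _ hi
  · rintro ⟨⟨hpP, hi⟩, hpst⟩
    have hp : p ∈ firstCoordSlab P s t := ⟨hpP, hpst⟩
    refine ⟨hp, Nat.ModEq.add_right_cancel' {q ∈ P | firstCoord q < s}.ncard ?_⟩
    rw [← rank_eq_rank_firstCoordSlab_add hP hp]
    exact hi

lemma firstCoord_proj (hd : 2 ≤ d) (x : EuclideanSpace ℝ (Fin d)) :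
    firstCoord (proj x) = firstCoord x := by
  simp only [firstCoord, proj, dif_pos (show 0 < d - 1 by omega), dif_pos (show 0 < d by omega)]
  rfl

lemma proj_image_firstCoordSlab (hd : 2 ≤ d) :
    proj '' firstCoordSlab P s t = firstCoordSlab (proj '' P) s t := by
  ext y
  constructor
  · rintro ⟨p, ⟨hp, hpst⟩, rfl⟩
    exact ⟨⟨p, hp, rfl⟩, by rwa [firstCoord_proj hd]⟩
  · rintro ⟨⟨p, hp, rfl⟩, hpst⟩
    exact ⟨p, ⟨hp, by rwa [firstCoord_proj hd] at hpst⟩, rfl⟩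

lemma setOf_rank_mem_Icc_eq_firstCoordSlab (hP : P.Finite) {p₁ p₂ : EuclideanSpace ℝ (Fin d)}
    (hp₁ : p₁ ∈ P) :
    {p ∈ P | rank P p₁ ≤ rank P p ∧ rank P p ≤ rank P p₂} =
      firstCoordSlab P (firstCoord p₁) (firstCoord p₂) := by
  ext p
  constructor
  · rintro ⟨hp, h₁, h₂⟩
    exact ⟨hp, (rank_le_rank_iff hP hp₁).1 h₁, (rank_le_rank_iff hP hp).1 h₂⟩
  · rintro ⟨hp, h₁, h₂⟩
    exact ⟨hp, rank_le_rank hP h₁, rank_le_rank hP h₂⟩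

end Slab

lemma AffGenPos.mono {m : ℕ} {Q Q' : Set (EuclideanSpace ℝ (Fin m))} (h : AffGenPos Q)
    (hsub : Q' ⊆ Q) : AffGenPos Q' :=
  fun s hs => h s (hs.trans hsub)

section Monotone

variable {d : ℕ} {P P' A B A' B' : Set (EuclideanSpace ℝ (Fin d))}

lemma Regular.mono (h : Regular P) (hsub : P' ⊆ P) : Regular P' :=
  ⟨fun i => (h.1 i).mono hsub, h.2.1.mono (Set.image_mono hsub),
    fun S T hS hT => h.2.2 S T (hS.trans hsub) (hT.trans hsub)⟩

lemma Regular.injOn_firstCoord (h : Regular P) (hd : 0 < d) : Set.InjOn firstCoord P := by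
  intro p hp q hq hpq
  simp only [firstCoord, dif_pos hd] at hpq
  exact h.1 ⟨0, hd⟩ hp hq hpq

lemma HighAbove.mono (h : HighAbove A B) (hA : A' ⊆ A) (hB : B' ⊆ B) : HighAbove A' B' :=
  ⟨h.1.mono hA hB, h.2.1.mono (Set.union_subset_union hA hB),
    fun S T hS hT => h.2.2 S T (hS.trans hA) (hT.trans hB)⟩

end Monotone

lemma modClass_congr {d a a' b : ℕ} (h : a % b = a' % b) (P : Set (EuclideanSpace ℝ (Fin d))) :
    modClass a b P = modClass a' b P := by
  simp only [modClass, h]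

lemma modClass_two_add_cases {d : ℕ} (P : Set (EuclideanSpace ℝ (Fin d))) (c : ℕ) :
    (modClass (1 + c) 2 P = modClass 1 2 P ∧ modClass (2 + c) 2 P = modClass 2 2 P) ∨
      (modClass (1 + c) 2 P = modClass 2 2 P ∧ modClass (2 + c) 2 P = modClass 1 2 P) := by
  rcases Nat.even_or_odd c with ⟨k, hk⟩ | ⟨k, hk⟩
  · exact Or.inl ⟨modClass_congr (by omega) P, modClass_congr (by omega) P⟩
  · exact Or.inr ⟨modClass_congr (by omega) P, modClass_congr (by omega) P⟩

lemma IsOscillator.injOn_firstCoord {d : ℕ} {P : Set (EuclideanSpace ℝ (Fin d))}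
    (hP : IsOscillator d P) : Set.InjOn firstCoord P := by
  cases hP with
  | single p => exact Set.injOn_singleton _ _
  | dimOne P _ =>
    intro p _ q _ hpq
    ext i
    simpa [firstCoord, Fin.fin_one_eq_zero i] using hpq
  | step _ hd _ _ hreg _ _ _ _ => exact hreg.injOn_firstCoord (by omega)

theorem isOscillator_firstCoordSlab {d : ℕ} {P : Set (EuclideanSpace ℝ (Fin d))}
    (hP : IsOscillator d P) (s t : ℝ) (hne : (firstCoordSlab P s t).Nonempty) :
    IsOscillator d (firstCoordSlab P s t) := by
  induction hP generalizing s t with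
  | single p =>
    rw [hne.subset_singleton_iff.1 firstCoordSlab_subset]
    exact .single p
  | dimOne P hfin => exact .dimOne _ (hfin.subset firstCoordSlab_subset)
  | @step d P hd hfin _ hreg _ _ hab _ ih1 ih2 ihproj =>
    set Q := firstCoordSlab P s t
    have hQfin : Q.Finite := hfin.subset firstCoordSlab_subset
    obtain hQ | hQ : Q.ncard = 1 ∨ 2 ≤ Q.ncard := by
      have := (Set.ncard_pos hQfin).2 hne
      omega
    · obtain ⟨p, hp⟩ := Set.ncard_eq_one.1 hQ
      rw [hp]
      exact .single p
    have hQinj : Set.InjOn firstCoord Q :=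
      (hreg.injOn_firstCoord (by omega)).mono firstCoordSlab_subset
    have hne_class : ∀ i, 1 ≤ i → i ≤ 2 → (modClass i 2 Q).Nonempty := fun i hi1 hi2 =>
      have ⟨p, hp, hpi⟩ := exists_rank_eq hQfin hQinj hi1 (hi2.trans hQ)
      ⟨p, hp, by rw [hpi]⟩
    obtain ⟨A, B, hA, hB, hAB, hQA, hQB⟩ : ∃ A B : Set (EuclideanSpace ℝ (Fin d)),
        (∀ s t, (firstCoordSlab A s t).Nonempty → IsOscillator d (firstCoordSlab A s t)) ∧
        (∀ s t, (firstCoordSlab B s t).Nonempty → IsOscillator d (firstCoordSlab B s t)) ∧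
        (HighAbove A B ∨ HighAbove B A) ∧
        modClass 1 2 Q = firstCoordSlab A s t ∧ modClass 2 2 Q = firstCoordSlab B s t := by
      rw [modClass_firstCoordSlab hfin 1 2, modClass_firstCoordSlab hfin 2 2]
      rcases modClass_two_add_cases P {q ∈ P | firstCoord q < s}.ncard with ⟨h₁, h₂⟩ | ⟨h₁, h₂⟩
      · exact ⟨_, _, ih1, ih2, hab, by rw [h₁], by rw [h₂]⟩
      · exact ⟨_, _, ih2, ih1, hab.symm, by rw [h₁], by rw [h₂]⟩
    refine .step Q hd hQfin hQ (hreg.mono firstCoordSlab_subset) ?_ ?_ ?_ ?_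
    · rw [hQA]
      exact hA s t (hQA ▸ hne_class 1 le_rfl one_le_two)
    · rw [hQB]
      exact hB s t (hQB ▸ hne_class 2 one_le_two le_rfl)
    · rw [hQA, hQB]
      exact hAB.imp (·.mono firstCoordSlab_subset firstCoordSlab_subset)
        (·.mono firstCoordSlab_subset firstCoordSlab_subset)
    · rw [proj_image_firstCoordSlab hd]
      exact ihproj s t (proj_image_firstCoordSlab hd ▸ hne.image proj)

theorem stmt9_general (d : ℕ) (P : Set (EuclideanSpace ℝ (Fin d)))
    (hP : IsOscillator d P) (a b : ℕ) (ha : 1 ≤ a) (hab : a ≤ b) (hb : b ≤ P.ncard) :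
    IsOscillator d {p ∈ P | a ≤ rank P p ∧ rank P p ≤ b} := by
  have hfin : P.Finite := Set.finite_of_ncard_pos (by omega)
  obtain ⟨p₁, hp₁, rfl⟩ := exists_rank_eq hfin hP.injOn_firstCoord ha (hab.trans hb)
  obtain ⟨p₂, hp₂, rfl⟩ := exists_rank_eq hfin hP.injOn_firstCoord (ha.trans hab) hb
  rw [setOf_rank_mem_Icc_eq_firstCoordSlab hfin hp₁]
  refine isOscillator_firstCoordSlab hP _ _ ⟨p₁, hp₁, le_rfl, ?_⟩
  exact (rank_le_rank_iff hfin hp₁).1 hab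

theorem stmt9 (d : ℕ) (hd : 1 ≤ d) (P : Set (EuclideanSpace ℝ (Fin d)))
    (hP : IsOscillator d P) (a b : ℕ) (ha : 1 ≤ a) (hab : a ≤ b) (hb : b ≤ P.ncard) :
    IsOscillator d {p ∈ P | a ≤ rank P p ∧ rank P p ≤ b} :=
  stmt9_general d P hP a b ha hab hb
end
end
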